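/- Let f be a polynomial with coefficients in ℤ_2. Then the dynamical system (ℤ_2, f) is minimal (all orbits dense) if and only if the induced map f_{/3} on ℤ/8ℤ is minimal (has a full cycle of length 8). -/

import Mathlib

/-!
Balls of radius `2^-n` in `ℤ_2` are the residue classes mod `2^n`, so `f` is minimal iff every
reduction `f_{/n}` is a single cycle. Given that `f_{/n}` is a single cycle, `f_{/n+1}` is one
iff `f^{2^n}(x) ≡ x + 2^n (mod 2^(n+1))`. For `n ≥ 3` this congruence propagates: write
`G = f^{2^(n-1)}` and `G x = x + 2^(n-1) u` with `u` odd; Taylor expansion gives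
`f^{2^n}(x) = G (G x) ≡ x + 2^(n-1) u (1 + G'(x)) (mod 2^(2n-2))`, and `G'(x) ≡ 1 (mod 4)`
because `f'` is odd (`f_{/2}` is injective) and `G` is the square of a parity-preserving map.
-/

open Function Polynomial

namespace Function

variable {α β : Type*}

def IsMinimal (σ : α → α) : Prop :=
  ∀ a, Set.range (fun k : ℕ => σ^[k] a) = Set.univ

namespace IsMinimal

variable {σ : α → α}

theorem exists_iterate_eq (h : IsMinimal σ) (a b : α) : ∃ k, σ^[k] a = b :=
  Set.range_eq_univ.1 (h a) b

theorem mem_periodicPts (h : IsMinimal σ) (a : α) : a ∈ periodicPts σ := by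
  obtain ⟨k, hk⟩ := h.exists_iterate_eq (σ a) a
  exact ⟨k + 1, k.succ_pos, by rwa [IsPeriodicPt, IsFixedPt, iterate_succ_apply]⟩

theorem injective [Finite α] (h : IsMinimal σ) : Injective σ :=
  injective_iff_periodicPts_eq_univ.2 (Set.eq_univ_of_forall h.mem_periodicPts)

theorem minimalPeriod_eq_card [Fintype α] (h : IsMinimal σ) (a : α) :
    minimalPeriod σ a = Fintype.card α := by
  refine le_antisymm minimalPeriod_le_card ?_
  have hsurj : Surjective fun k : Fin (minimalPeriod σ a) => σ^[k] a := fun b => by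
    obtain ⟨k, rfl⟩ := h.exists_iterate_eq a b
    exact ⟨⟨k % minimalPeriod σ a, Nat.mod_lt _ (minimalPeriod_pos_of_mem_periodicPts
      (h.mem_periodicPts a))⟩, iterate_mod_minimalPeriod_eq⟩
  simpa using Fintype.card_le_of_surjective _ hsurj

theorem iterate_card_mul_apply [Fintype α] (h : IsMinimal σ) (n : ℕ) (a : α) :
    σ^[n * Fintype.card α] a = a :=
  (h.minimalPeriod_eq_card a ▸ isPeriodicPt_minimalPeriod σ a).const_mul n

theorem of_semiconj {τ : β → β} {π : α → β} (hπ : Surjective π) (hs : Semiconj π σ τ)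
    (h : IsMinimal σ) : IsMinimal τ := fun b => Set.range_eq_univ.2 fun c => by
  obtain ⟨a, rfl⟩ := hπ b
  obtain ⟨a', rfl⟩ := hπ c
  obtain ⟨k, rfl⟩ := h.exists_iterate_eq a a'
  exact ⟨k, (hs.iterate_right k a).symm⟩

theorem of_semiconj_of_exists_iterate_eq_of_eq {τ : β → β} {π : α → β} (hs : Semiconj π σ τ)
    (h : IsMinimal τ) (hfib : ∀ a a', π a = π a' → ∃ k, σ^[k] a = a') : IsMinimal σ :=
  fun a => Set.range_eq_univ.2 fun b => by
    obtain ⟨k, hk⟩ := h.exists_iterate_eq (π a) (π b)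
    obtain ⟨j, rfl⟩ := hfib (σ^[k] a) b (by rw [hs.iterate_right k a, hk])
    exact ⟨j + k, iterate_add_apply σ j k a⟩

end IsMinimal

theorem Semiconj.image_range_iterate {σ : α → α} {τ : β → β} {π : α → β} (hs : Semiconj π σ τ)
    (a : α) : π '' Set.range (fun k : ℕ => σ^[k] a) = Set.range fun k : ℕ => τ^[k] (π a) := by
  rw [← Set.range_comp]
  exact congrArg Set.range (funext fun k => hs.iterate_right k a)

theorem isMinimal_iff_of_semiconj {σ : α → α} {τ : β → β} {π : α → β} (hπ : Surjective π)
    (hs : Semiconj π σ τ) :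
    IsMinimal τ ↔ ∀ a, π '' Set.range (fun k : ℕ => σ^[k] a) = Set.univ := by
  simp only [hs.image_range_iterate]
  exact ⟨fun h a => h (π a), fun h b => by obtain ⟨a, rfl⟩ := hπ b; exact h a⟩

end Function

namespace ZMod

variable {k : ℕ}

local notation "π" => castHom (pow_dvd_pow 2 (Nat.le_succ k)) (ZMod (2 ^ k))

theorem eq_or_eq_add_of_castHom_eq {y z : ZMod (2 ^ (k + 1))} (h : π y = π z) :
    z = y ∨ z = y + 2 ^ k := by
  have hval : ((z - y).val : ZMod (2 ^ k)) = 0 := by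
    rw [← map_natCast π, natCast_zmod_val, map_sub, h, sub_self]
  obtain ⟨c, hc⟩ := (natCast_eq_zero_iff _ _).1 hval
  have hlt : 2 ^ k * c < 2 ^ k * 2 := hc ▸ pow_succ 2 k ▸ val_lt (z - y)
  obtain rfl | rfl : c = 0 ∨ c = 1 := by
    have := Nat.lt_of_mul_lt_mul_left hlt; omega
  · left
    rw [← sub_eq_zero, ← natCast_zmod_val (z - y), hc, mul_zero, Nat.cast_zero]
  · right
    rw [← sub_eq_iff_eq_add', ← natCast_zmod_val (z - y), hc, mul_one, Nat.cast_pow,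
      Nat.cast_ofNat]

variable {σ : ZMod (2 ^ (k + 1)) → ZMod (2 ^ (k + 1))} {τ : ZMod (2 ^ k) → ZMod (2 ^ k)}

theorem iterate_two_pow_eq_add_of_isMinimal (hs : Semiconj π σ τ) (h : IsMinimal σ)
    (a : ZMod (2 ^ (k + 1))) : σ^[2 ^ k] a = a + 2 ^ k := by
  have hτ : IsMinimal τ := h.of_semiconj (castHom_surjective _) hs
  have hproj : π (σ^[2 ^ k] a) = π a := by
    have hper := hτ.iterate_card_mul_apply 1 (π a)
    rwa [one_mul, card, ← hs.iterate_right] at hper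
  refine (eq_or_eq_add_of_castHom_eq hproj.symm).resolve_left fun hfix => ?_
  refine not_isPeriodicPt_of_pos_of_lt_minimalPeriod (pow_ne_zero k two_ne_zero) ?_ hfix
  rw [h.minimalPeriod_eq_card, card]
  exact Nat.pow_lt_pow_right one_lt_two k.lt_succ_self

theorem isMinimal_of_iterate_two_pow_eq_add (hs : Semiconj π σ τ) (hτ : IsMinimal τ)
    (h : ∀ a, σ^[2 ^ k] a = a + 2 ^ k) : IsMinimal σ := by
  refine hτ.of_semiconj_of_exists_iterate_eq_of_eq hs fun a b hab => ?_
  rcases eq_or_eq_add_of_castHom_eq hab with rfl | rfl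
  · exact ⟨0, rfl⟩
  · exact ⟨2 ^ k, h a⟩

end ZMod

namespace PadicInt

variable {p : ℕ} [Fact p.Prime] {n : ℕ} {x y : ℤ_[p]}

theorem toZModPow_eq_iff_pow_dvd_sub :
    toZModPow n x = toZModPow n y ↔ (p : ℤ_[p]) ^ n ∣ x - y := by
  rw [← sub_eq_zero, ← map_sub, ← RingHom.mem_ker, ker_toZModPow, Ideal.mem_span_singleton]

theorem toZModPow_eq_iff_norm_sub_le :
    toZModPow n x = toZModPow n y ↔ ‖x - y‖ ≤ (p : ℝ) ^ (-n : ℤ) := by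
  rw [norm_le_pow_iff_mem_span_pow, ← ker_toZModPow, RingHom.mem_ker, map_sub, sub_eq_zero]

theorem dense_iff_forall_image_toZModPow_eq_univ {S : Set ℤ_[p]} :
    Dense S ↔ ∀ n, toZModPow n '' S = Set.univ := by
  rw [Metric.dense_iff]
  constructor
  · intro h n
    refine Set.eq_univ_of_forall fun a => ?_
    obtain ⟨y, rfl⟩ := ZMod.ringHom_surjective (toZModPow n) a
    obtain ⟨z, hz, hzS⟩ := h y _ (zpow_pos (Nat.cast_pos.2 (Fact.out : p.Prime).pos) _)
    rw [Metric.mem_ball, dist_eq_norm] at hz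
    exact ⟨z, hzS, toZModPow_eq_iff_norm_sub_le.2 hz.le⟩
  · intro h y r hr
    obtain ⟨n, hn⟩ := exists_pow_neg_lt p hr
    obtain ⟨z, hzS, hz⟩ := (h n).symm ▸ Set.mem_univ (toZModPow n y)
    rw [toZModPow_eq_iff_norm_sub_le, ← dist_eq_norm] at hz
    exact ⟨z, Metric.mem_ball.2 (hz.trans_lt hn), hzS⟩

theorem two_dvd_or_odd (x : ℤ_[2]) : 2 ∣ x ∨ Odd x := by
  rcases (by decide : ∀ a : ZMod (2 ^ 1), a = 0 ∨ a = 1) (toZModPow 1 x) with h | h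
  · left
    simpa using toZModPow_eq_iff_pow_dvd_sub.1 (h.trans (map_zero _).symm)
  · right
    obtain ⟨v, hv⟩ := toZModPow_eq_iff_pow_dvd_sub.1 (h.trans (map_one _).symm)
    exact ⟨v, by push_cast at hv; linear_combination hv⟩

end PadicInt

namespace Polynomial

section CommRing

variable {R : Type*} [CommRing R]

theorem four_dvd_derivative_eval_add_two_mul_sub (P : R[X]) (x t : R) :
    4 ∣ P.derivative.eval (x + 2 * t) - P.derivative.eval x := by
  obtain ⟨c, hc⟩ := P.derivative.binomExpansion x (2 * t)
  have hP'' : P.derivative.derivative = 2 • hasseDeriv 2 P :=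
    (congrFun (factorial_smul_hasseDeriv (R := R) 2) P).symm
  refine ⟨t * (hasseDeriv 2 P).eval x + c * t ^ 2, ?_⟩
  rw [hc, hP'', eval_smul, nsmul_eq_mul]
  ring

theorem pow_dvd_eval_eval_sub (G : R[X]) {m : ℕ} (hm : 2 ≤ m) {x : R}
    (hG : 2 ^ (m + 1) ∣ G.eval x - x - 2 ^ m) (hG' : 4 ∣ G.derivative.eval x - 1) :
    2 ^ (m + 2) ∣ G.eval (G.eval x) - x - 2 ^ (m + 1) := by
  obtain ⟨j, rfl⟩ : ∃ j, m = j + 2 := ⟨m - 2, by omega⟩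
  obtain ⟨w, hw⟩ := hG
  obtain ⟨d, hd⟩ := hG'
  have hx : G.eval x = x + 2 ^ (j + 2) * (1 + 2 * w) := by linear_combination hw
  obtain ⟨c, hc⟩ := G.binomExpansion x (2 ^ (j + 2) * (1 + 2 * w))
  refine ⟨w + d * (1 + 2 * w) + 2 ^ j * c * (1 + 2 * w) ^ 2, ?_⟩
  rw [hx, hc, hx]
  linear_combination (2 ^ (j + 2) * (1 + 2 * w)) * hd

end CommRing

noncomputable def compTwoPow {R : Type*} [Semiring R] (F : R[X]) : ℕ → R[X]
  | 0 => F
  | m + 1 => (F.compTwoPow m).comp (F.compTwoPow m)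

theorem eval_compTwoPow {R : Type*} [CommSemiring R] (F : R[X]) (m : ℕ) (x : R) :
    (F.compTwoPow m).eval x = (fun t => F.eval t)^[2 ^ m] x := by
  induction m generalizing x with
  | zero => rfl
  | succ m ih => rw [compTwoPow, eval_comp, ih, ih, ← iterate_add_apply, ← two_mul, pow_succ']

theorem derivative_compTwoPow_succ_eval {R : Type*} [CommSemiring R] (F : R[X]) (m : ℕ) (x : R) :
    (F.compTwoPow (m + 1)).derivative.eval x =
      (F.compTwoPow m).derivative.eval ((F.compTwoPow m).eval x) *
        (F.compTwoPow m).derivative.eval x := by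
  rw [compTwoPow, derivative_comp, eval_mul, eval_comp, mul_comm]

theorem semiconj_eval_map {R S : Type*} [CommSemiring R] [CommSemiring S] (φ : R →+* S)
    (F : R[X]) : Semiconj φ (fun x => F.eval x) (fun y => (F.map φ).eval y) := fun x => by
  simp only [eval_map, eval₂_hom]

open PadicInt

section Padic

variable {p : ℕ} [Fact p.Prime] (F : ℤ_[p][X])

-- The map `f_{/n}` of the paper.
noncomputable def reduceModPow (n : ℕ) : ZMod (p ^ n) → ZMod (p ^ n) :=
  fun a => (F.map (toZModPow n)).eval a

theorem semiconj_toZModPow_reduceModPow (n : ℕ) :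
    Semiconj (toZModPow n) (fun x => F.eval x) (F.reduceModPow n) :=
  semiconj_eval_map _ F

theorem semiconj_castHom_reduceModPow {m n : ℕ} (h : m ≤ n) :
    Semiconj (ZMod.castHom (pow_dvd_pow p h) (ZMod (p ^ m))) (F.reduceModPow n)
      (F.reduceModPow m) := by
  unfold reduceModPow
  rw [← zmod_cast_comp_toZModPow m n h, ← map_map]
  exact semiconj_eval_map _ _

variable {F}

theorem _root_.Function.IsMinimal.reduceModPow_of_le {m n : ℕ} (h : m ≤ n)
    (hn : IsMinimal (F.reduceModPow n)) : IsMinimal (F.reduceModPow m) :=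
  hn.of_semiconj (ZMod.castHom_surjective _) (F.semiconj_castHom_reduceModPow h)

theorem pow_dvd_iterate_mul_sub_of_isMinimal {n : ℕ} (h : IsMinimal (F.reduceModPow n))
    (j : ℕ) (x : ℤ_[p]) : (p : ℤ_[p]) ^ n ∣ (fun t => F.eval t)^[j * p ^ n] x - x := by
  rw [← toZModPow_eq_iff_pow_dvd_sub, (F.semiconj_toZModPow_reduceModPow n).iterate_right]
  simpa using h.iterate_card_mul_apply j (toZModPow n x)

end Padic

variable {F : ℤ_[2][X]}

theorem odd_derivative_eval_of_isMinimal (h : IsMinimal (F.reduceModPow 2)) (x : ℤ_[2]) :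
    Odd (F.derivative.eval x) := by
  refine (two_dvd_or_odd _).resolve_left fun ⟨w, hw⟩ => ?_
  obtain ⟨c, hc⟩ := F.binomExpansion x 2
  have hmod : toZModPow 2 (F.eval (x + 2)) = toZModPow 2 (F.eval x) :=
    toZModPow_eq_iff_pow_dvd_sub.2 ⟨w + c, by rw [hc, hw]; push_cast; ring⟩
  rw [F.semiconj_toZModPow_reduceModPow, F.semiconj_toZModPow_reduceModPow] at hmod
  have h2 := h.injective hmod
  rw [map_add, map_ofNat, add_eq_left] at h2
  exact absurd h2 (by decide)

theorem odd_derivative_compTwoPow_eval (h : IsMinimal (F.reduceModPow 2)) (m : ℕ) (x : ℤ_[2]) :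
    Odd ((F.compTwoPow m).derivative.eval x) := by
  induction m generalizing x with
  | zero => exact odd_derivative_eval_of_isMinimal h x
  | succ m ih => rw [derivative_compTwoPow_succ_eval]; exact (ih _).mul (ih x)

theorem four_dvd_derivative_compTwoPow_eval_sub_one (h : IsMinimal (F.reduceModPow 2)) {m : ℕ}
    (hm : 2 ≤ m) (x : ℤ_[2]) : 4 ∣ (F.compTwoPow m).derivative.eval x - 1 := by
  obtain ⟨j, rfl⟩ : ∃ j, m = j + 1 + 1 := ⟨m - 2, by omega⟩
  set G := F.compTwoPow (j + 1)
  -- `(G ∘ G)'(x) = G'(G x) G'(x) ≡ G'(x)^2 ≡ 1 (mod 4)`, as `G x ≡ x (mod 2)` and `G'(x)` is odd.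
  obtain ⟨t, ht⟩ : 2 ∣ G.eval x - x := by
    have := pow_dvd_iterate_mul_sub_of_isMinimal (h.reduceModPow_of_le one_le_two) (2 ^ j) x
    rwa [pow_one, pow_one, ← pow_succ, Nat.cast_ofNat, ← eval_compTwoPow] at this
  obtain ⟨d, hd⟩ := G.four_dvd_derivative_eval_add_two_mul_sub x t
  obtain ⟨v, hv⟩ := odd_derivative_compTwoPow_eval h (j + 1) x
  rw [derivative_compTwoPow_succ_eval]
  refine ⟨d * G.derivative.eval x + v ^ 2 + v, ?_⟩
  rw [show G.eval x = x + 2 * t by linear_combination ht]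
  linear_combination G.derivative.eval x * hd + (G.derivative.eval x + 2 * v + 1) * hv

theorem reduceModPow_iterate_two_pow_eq_add {m : ℕ} (hm : 2 ≤ m)
    (h : IsMinimal (F.reduceModPow (m + 1))) (a : ZMod (2 ^ (m + 2))) :
    (F.reduceModPow (m + 2))^[2 ^ (m + 1)] a = a + 2 ^ (m + 1) := by
  obtain ⟨x, rfl⟩ := ZMod.ringHom_surjective (toZModPow (m + 2)) a
  have hhalf : toZModPow (m + 1) ((fun t => F.eval t)^[2 ^ m] x) =
      toZModPow (m + 1) (x + 2 ^ m) := by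
    rw [(F.semiconj_toZModPow_reduceModPow _).iterate_right, map_add, map_pow, map_ofNat]
    exact ZMod.iterate_two_pow_eq_add_of_isMinimal (F.semiconj_castHom_reduceModPow m.le_succ) h _
  have hG : 2 ^ (m + 1) ∣ (F.compTwoPow m).eval x - x - 2 ^ m := by
    rw [eval_compTwoPow, sub_sub]
    simpa using toZModPow_eq_iff_pow_dvd_sub.1 hhalf
  have hG' := four_dvd_derivative_compTwoPow_eval_sub_one (h.reduceModPow_of_le (by omega)) hm x
  have key := (F.compTwoPow m).pow_dvd_eval_eval_sub hm hG hG'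
  rw [eval_compTwoPow, eval_compTwoPow, ← iterate_add_apply, ← two_mul, ← pow_succ'] at key
  rw [← (F.semiconj_toZModPow_reduceModPow _).iterate_right, ← map_ofNat (toZModPow (m + 2)) 2,
    ← map_pow, ← map_add, toZModPow_eq_iff_pow_dvd_sub]
  simpa [sub_sub] using key

theorem _root_.Function.IsMinimal.reduceModPow_succ {n : ℕ} (hn : 3 ≤ n)
    (h : IsMinimal (F.reduceModPow n)) : IsMinimal (F.reduceModPow (n + 1)) := by
  obtain ⟨m, rfl⟩ : ∃ m, n = m + 1 := ⟨n - 1, by omega⟩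
  exact ZMod.isMinimal_of_iterate_two_pow_eq_add
    (F.semiconj_castHom_reduceModPow (m + 1).le_succ) h
    (reduceModPow_iterate_two_pow_eq_add (by omega) h)

theorem _root_.Function.IsMinimal.reduceModPow (h : IsMinimal (F.reduceModPow 3)) (n : ℕ) :
    IsMinimal (F.reduceModPow n) := by
  rcases le_total n 3 with hn | hn
  · exact h.reduceModPow_of_le hn
  · induction n, hn using Nat.le_induction with
    | base => exact h
    | succ n hn ih => exact ih.reduceModPow_succ hn

end Polynomial

theorem stmt14 (F : Polynomial ℤ_[2]) :
    (∀ x : ℤ_[2], Dense (Set.range fun k : ℕ => (fun t => F.eval t)^[k] x)) ↔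
      ∀ g : ZMod (2 ^ 3) → ZMod (2 ^ 3),
        (∀ x : ℤ_[2], g (PadicInt.toZModPow 3 x) = PadicInt.toZModPow 3 (F.eval x)) →
          ∀ a : ZMod (2 ^ 3), Set.range (fun k : ℕ => g^[k] a) = Set.univ := by
  simp only [PadicInt.dense_iff_forall_image_toZModPow_eq_univ]
  constructor
  · intro hdense g hg
    exact (isMinimal_iff_of_semiconj (ZMod.ringHom_surjective _) fun x => (hg x).symm).2
      fun x => hdense x 3
  · intro h x n
    have h3 : IsMinimal (F.reduceModPow 3) :=
      h _ fun x => (F.semiconj_toZModPow_reduceModPow 3 x).symm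
    exact (isMinimal_iff_of_semiconj (ZMod.ringHom_surjective _)
      (F.semiconj_toZModPow_reduceModPow n)).1 (h3.reduceModPow n) x
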